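/- arXiv:math/0307116 — 2 statements merged into one kernel-verified Lean document; each statement's English description precedes it below -/
import Mathlib

section
/- Let g ∈ SL(2,ℂ) with g₁₁ ≠ 0, and let v(g) be the lower unipotent matrix with rows (1,0) and (g₂₁/g₁₁, 1) (the N⁻-component of the Gauss decomposition of g). Then the (1,1) entry u(g)₁₁ of the unitary Iwasawa factor of g satisfies |u(g)₁₁| = (b(v(g))₁₁)⁻¹, where b(v(g))₁₁ > 0 is the (1,1) entry of the Iwasawa B-factor of v(g). In other words, the modulus of the torus component of the Gauss decomposition of u(g) equals the inverse of the torus component of the Iwasawa decomposition of v(g). -/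
/-!
Only first columns matter. Right multiplication by an upper triangular `b` scales the first
column by `b₁₁`, and a unitary matrix has a unit first column, so the first column of `u·b` has
length `|b₁₁|`. For `g = u·b` this makes `g₂₁/g₁₁ = u₂₁/u₁₁`, hence
`1 + |g₂₁/g₁₁|² = 1/|u₁₁|²`; for `v(g) = u'·b'`, whose first column is `(1, g₂₁/g₁₁)`, the
same quantity is `(b'₁₁)²`.
-/

/-- Membership in `SU(2)`: determinant one and unitary. -/
def IsSU2 (u : Matrix (Fin 2) (Fin 2) ℂ) : Prop :=
  u.det = 1 ∧ u.conjTranspose * u = 1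

/-- Upper triangular element of `SL(2,ℂ)` with positive real diagonal entries
(the `B`-factor of the Iwasawa decomposition `G = UB`). -/
def IsPosUpper (b : Matrix (Fin 2) (Fin 2) ℂ) : Prop :=
  b.det = 1 ∧ b 1 0 = 0 ∧ (b 0 0).im = 0 ∧ 0 < (b 0 0).re ∧
    (b 1 1).im = 0 ∧ 0 < (b 1 1).re

open Matrix

theorem Matrix.mul_apply_zero_of_apply_one_zero {R : Type*} [NonUnitalNonAssocSemiring R]
    {u b : Matrix (Fin 2) (Fin 2) R} (hb : b 1 0 = 0) (i : Fin 2) :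
    (u * b) i 0 = u i 0 * b 0 0 := by
  simp [Matrix.mul_apply, Fin.sum_univ_two, hb]

theorem Matrix.sum_norm_sq_apply_of_conjTranspose_mul_self {𝕜 n : Type*} [RCLike 𝕜]
    [Fintype n] [DecidableEq n] {u : Matrix n n 𝕜} (hu : uᴴ * u = 1) (j : n) :
    ∑ i, ‖u i j‖ ^ 2 = 1 := by
  have h := congrFun₂ hu j j
  simp only [Matrix.mul_apply, conjTranspose_apply, RCLike.star_def, RCLike.conj_mul,
    Matrix.one_apply_eq] at h
  exact_mod_cast h

theorem Matrix.norm_sq_add_norm_sq_mul_apply_zero {𝕜 : Type*} [RCLike 𝕜]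
    {u b : Matrix (Fin 2) (Fin 2) 𝕜} (hu : uᴴ * u = 1) (hb : b 1 0 = 0) :
    ‖(u * b) 0 0‖ ^ 2 + ‖(u * b) 1 0‖ ^ 2 = ‖b 0 0‖ ^ 2 := by
  have hcol := Matrix.sum_norm_sq_apply_of_conjTranspose_mul_self hu 0
  rw [Fin.sum_univ_two] at hcol
  simp only [Matrix.mul_apply_zero_of_apply_one_zero hb, norm_mul, mul_pow]
  linear_combination ‖b 0 0‖ ^ 2 * hcol

theorem Matrix.one_add_norm_sq_div_mul_apply_zero {𝕜 : Type*} [RCLike 𝕜]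
    {u b : Matrix (Fin 2) (Fin 2) 𝕜} (hu : uᴴ * u = 1) (hb : b 1 0 = 0)
    (h00 : (u * b) 0 0 ≠ 0) :
    1 + ‖(u * b) 1 0 / (u * b) 0 0‖ ^ 2 = (‖u 0 0‖ ^ 2)⁻¹ := by
  have hlen := Matrix.norm_sq_add_norm_sq_mul_apply_zero hu hb
  have hg00 := Matrix.mul_apply_zero_of_apply_one_zero (u := u) hb 0
  rw [hg00, mul_ne_zero_iff] at h00
  rw [hg00, norm_mul] at hlen
  rw [norm_div, hg00, norm_mul]
  field_simp [h00.1, h00.2]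
  linear_combination hlen

theorem gauss_iwasawa_torus_relation_general
    (g u b u' b' : Matrix (Fin 2) (Fin 2) ℂ)
    (hg11 : g 0 0 ≠ 0)
    (hu : IsSU2 u) (hb : IsPosUpper b) (hgub : g = u * b)
    (hu' : IsSU2 u') (hb' : IsPosUpper b')
    (hvub : !![1, 0; g 1 0 / g 0 0, 1] = u' * b') :
    ‖u 0 0‖ = ((b' 0 0).re)⁻¹ := by
  obtain ⟨-, hb10, -⟩ := hb
  obtain ⟨-, hb'10, hb'im, hb're, -⟩ := hb'
  have hv := Matrix.norm_sq_add_norm_sq_mul_apply_zero hu'.2 hb'10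
  rw [← hvub] at hv
  have hg := Matrix.one_add_norm_sq_div_mul_apply_zero hu.2 hb10 (hgub ▸ hg11)
  rw [← hgub] at hg
  have hb'norm : ‖b' 0 0‖ = (b' 0 0).re := by
    rw [← Complex.re_add_im (b' 0 0), hb'im, Complex.ofReal_zero, zero_mul, add_zero,
      Complex.norm_of_nonneg hb're.le, Complex.ofReal_re]
  simp only [of_apply, cons_val', cons_val_zero, cons_val_one, empty_val', cons_val_fin_one,
    norm_one, one_pow, hb'norm, hg] at hv
  rw [← pow_left_inj₀ (norm_nonneg _) (inv_nonneg.2 hb're.le) two_ne_zero, inv_pow, ← hv, inv_inv]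

/-- Lemma 2.2: if `g ∈ SL(2,ℂ)` has `g₁₁ ≠ 0`, `g = u·b` is its Iwasawa decomposition,
`v(g) = [[1,0],[g₂₁/g₁₁,1]]` is the `N⁻`-factor of its Gauss decomposition, and
`v(g) = u'·b'` is the Iwasawa decomposition of `v(g)`, then
`|u(g)₁₁| = (b(v(g))₁₁)⁻¹`. -/
theorem gauss_iwasawa_torus_relation
    (g u b u' b' : Matrix (Fin 2) (Fin 2) ℂ)
    (hg : g.det = 1) (hg11 : g 0 0 ≠ 0)
    (hu : IsSU2 u) (hb : IsPosUpper b) (hgub : g = u * b)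
    (hu' : IsSU2 u') (hb' : IsPosUpper b')
    (hvub : !![1, 0; g 1 0 / g 0 0, 1] = u' * b') :
    ‖u 0 0‖ = ((b' 0 0).re)⁻¹ :=
  gauss_iwasawa_torus_relation_general g u b u' b' hg11 hu hb hgub hu' hb' hvub
end

section
/- For every τ ∈ ℝ^ℓ, writing τ̃ := Φ⁻¹(τ), the action variables satisfy the recursion J_j(τ) = 𝒥(τ̃_j) · ( l_j − Σ_{i<j} c_{ji} J_i(τ) ) for every j = 1, …, ℓ; in particular J₁(τ) = l₁·𝒥(τ̃₁). -/
/-!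
Write `τ = Φ(σ)`. Since `K_λ ∘ Φ = Σ_i l_i K(σ_i)` and `K' = 2𝒥`, the chain rule applied to the
basis vector `e_j` reads `2 J_j + 𝒥(σ_j) Σ_{i<j} c_{ji} 2 J_i = 2 l_j 𝒥(σ_j)`: the Jacobian of `Φ`
is unipotent triangular, with `∂Φ_i/∂σ_j = c_{ji} 𝒥(σ_j)` for `i < j`. The chain rule needs `K_λ`
to be differentiable, which follows from an explicit inverse of `Φ` built by downward recursion.
-/

open Real Finset

noncomputable section

/-- `K(t) = log(1 + e^{2t})`. -/
def Kfun (t : ℝ) : ℝ := Real.log (1 + Real.exp (2 * t))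

/-- `𝒥(t) = e^{2t}/(1 + e^{2t})`. -/
def Jfun (t : ℝ) : ℝ := Real.exp (2 * t) / (1 + Real.exp (2 * t))

/-- The coordinate change `Φ(σ)_i = σ_i + (1/2)·Σ_{j>i} c_{ji} K(σ_j)`. -/
def Phi {ℓ : ℕ} (c : Fin ℓ → Fin ℓ → ℤ) (σ : Fin ℓ → ℝ) : Fin ℓ → ℝ :=
  fun i => σ i + (1 / 2) * ∑ j ∈ Finset.univ.filter (fun j => i < j), (c j i : ℝ) * Kfun (σ j)

/-- The inverse of the coordinate change `Φ`. -/
def PhiInv {ℓ : ℕ} (c : Fin ℓ → Fin ℓ → ℤ) : (Fin ℓ → ℝ) → (Fin ℓ → ℝ) :=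
  Function.invFun (Phi c)

/-- The Kähler potential `K_λ(τ) = Σ_i l_i K(τ̃_i)`, where `τ̃ = Φ⁻¹(τ)`. -/
def Klam {ℓ : ℕ} (l : Fin ℓ → ℤ) (c : Fin ℓ → Fin ℓ → ℤ) (τ : Fin ℓ → ℝ) : ℝ :=
  ∑ i, (l i : ℝ) * Kfun (PhiInv c τ i)

/-- The action variables `J_j(τ) = (1/2)·∂K_λ/∂τ_j`. -/
def Jact {ℓ : ℕ} (l : Fin ℓ → ℤ) (c : Fin ℓ → Fin ℓ → ℤ) (j : Fin ℓ) (τ : Fin ℓ → ℝ) : ℝ :=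
  (1 / 2) * fderiv ℝ (Klam l c) τ (Pi.single j 1)

/-- `L_j(τ) = Σ_{i<j} c_{ji} J_i(τ)`. -/
def Lfun {ℓ : ℕ} (l : Fin ℓ → ℤ) (c : Fin ℓ → Fin ℓ → ℤ) (j : Fin ℓ) (τ : Fin ℓ → ℝ) : ℝ :=
  ∑ i ∈ Finset.univ.filter (fun i => i < j), (c j i : ℝ) * Jact l c i τ

theorem hasDerivAt_Kfun (t : ℝ) : HasDerivAt Kfun (2 * Jfun t) t := by
  have hexp : HasDerivAt (fun s => 1 + Real.exp (2 * s)) (Real.exp (2 * t) * 2) t :=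
    (((hasDerivAt_id t).const_mul 2).exp.const_add 1).congr_deriv (by simp)
  exact (hexp.log (by positivity)).congr_deriv (by rw [Jfun]; ring)

theorem differentiable_Kfun : Differentiable ℝ Kfun :=
  fun t => (hasDerivAt_Kfun t).differentiableAt

theorem hasFDerivAt_sum_mul_comp_apply {ι : Type*} [Fintype ι] {g g' : ℝ → ℝ} (s : Finset ι)
    (w : ι → ℝ) (hg : ∀ t, HasDerivAt g (g' t) t) (σ : ι → ℝ) :
    HasFDerivAt (fun σ : ι → ℝ => ∑ i ∈ s, w i * g (σ i))
      (∑ i ∈ s, (w i * g' (σ i)) • ContinuousLinearMap.proj (R := ℝ) (φ := fun _ => ℝ) i) σ := by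
  refine HasFDerivAt.fun_sum fun i _ => ?_
  rw [mul_smul]
  exact ((hg (σ i)).comp_hasFDerivAt σ (hasFDerivAt_apply i σ)).const_mul (w i)

section Shear

variable {ℓ : ℕ}

/-- Solves `Φ(σ) = τ` for `σ_i` by downward recursion on `i`: `Φ(σ)_i - σ_i` only involves the
`σ_j` with `j > i`. -/
def phiInvRec (c : Fin ℓ → Fin ℓ → ℤ) (τ : Fin ℓ → ℝ) (i : Fin ℓ) : ℝ :=
  τ i - (1 / 2) * ∑ j ∈ (univ.filter (fun j => i < j)).attach,
      (c j.1 i : ℝ) * Kfun (phiInvRec c τ j.1)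
termination_by ℓ - i.val
decreasing_by
  have hij := (mem_filter.mp j.2).2
  have := j.1.isLt
  rw [Fin.lt_def] at hij
  omega

theorem phiInvRec_apply (c : Fin ℓ → Fin ℓ → ℤ) (τ : Fin ℓ → ℝ) (i : Fin ℓ) :
    phiInvRec c τ i = τ i - (1 / 2) * ∑ j ∈ univ.filter (fun j => i < j),
      (c j i : ℝ) * Kfun (phiInvRec c τ j) := by
  rw [phiInvRec, sum_attach _ (fun j => (c j i : ℝ) * Kfun (phiInvRec c τ j))]

theorem Phi_phiInvRec (c : Fin ℓ → Fin ℓ → ℤ) (τ : Fin ℓ → ℝ) : Phi c (phiInvRec c τ) = τ := by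
  funext i
  rw [Phi, phiInvRec_apply]
  ring

theorem phiInvRec_Phi (c : Fin ℓ → Fin ℓ → ℤ) (σ : Fin ℓ → ℝ) : phiInvRec c (Phi c σ) = σ := by
  funext i
  induction i using WellFoundedGT.induction with
  | _ i ih =>
    have hsum : ∀ j ∈ univ.filter (fun j => i < j),
        (c j i : ℝ) * Kfun (phiInvRec c (Phi c σ) j) = c j i * Kfun (σ j) :=
      fun j hj => by rw [ih j (mem_filter.mp hj).2]
    rw [phiInvRec_apply, sum_congr rfl hsum, Phi]
    ring

theorem PhiInv_eq_phiInvRec (c : Fin ℓ → Fin ℓ → ℤ) : PhiInv c = phiInvRec c := by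
  funext τ
  have hinj : Function.Injective (Phi c) := Function.LeftInverse.injective (phiInvRec_Phi c)
  simpa only [PhiInv, Phi_phiInvRec] using Function.leftInverse_invFun hinj (phiInvRec c τ)

theorem PhiInv_Phi (c : Fin ℓ → Fin ℓ → ℤ) (σ : Fin ℓ → ℝ) : PhiInv c (Phi c σ) = σ := by
  rw [PhiInv_eq_phiInvRec, phiInvRec_Phi]

theorem differentiable_PhiInv (c : Fin ℓ → Fin ℓ → ℤ) : Differentiable ℝ (PhiInv c) := by
  rw [PhiInv_eq_phiInvRec, differentiable_pi]
  intro i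
  induction i using WellFoundedGT.induction with
  | _ i ih =>
    rw [show (fun τ => phiInvRec c τ i) = _ from funext fun τ => phiInvRec_apply c τ i]
    refine (differentiable_apply i).sub (Differentiable.const_mul ?_ _)
    exact Differentiable.fun_sum fun j hj =>
      (differentiable_Kfun.comp (ih j (mem_filter.mp hj).2)).const_mul _

theorem differentiable_Klam (l : Fin ℓ → ℤ) (c : Fin ℓ → Fin ℓ → ℤ) :
    Differentiable ℝ (Klam l c) :=
  Differentiable.fun_sum fun i _ =>
    (differentiable_Kfun.comp ((differentiable_apply i).comp (differentiable_PhiInv c))).const_mul _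

theorem Klam_Phi (l : Fin ℓ → ℤ) (c : Fin ℓ → Fin ℓ → ℤ) (σ : Fin ℓ → ℝ) :
    Klam l c (Phi c σ) = ∑ i, (l i : ℝ) * Kfun (σ i) := by
  simp only [Klam, PhiInv_Phi]

/-- The Jacobian of `Φ` at `σ`; the factor `1/2` in `Φ` cancels against `K' = 2𝒥`. -/
def phiDeriv (c : Fin ℓ → Fin ℓ → ℤ) (σ : Fin ℓ → ℝ) : (Fin ℓ → ℝ) →L[ℝ] (Fin ℓ → ℝ) :=
  ContinuousLinearMap.pi fun i => ContinuousLinearMap.proj i +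
    ∑ j ∈ univ.filter (fun j => i < j), ((c j i : ℝ) * Jfun (σ j)) • ContinuousLinearMap.proj j

theorem hasFDerivAt_Phi (c : Fin ℓ → Fin ℓ → ℤ) (σ : Fin ℓ → ℝ) :
    HasFDerivAt (Phi c) (phiDeriv c σ) σ := by
  refine hasFDerivAt_pi'.2 fun i => ?_
  have h := (hasFDerivAt_apply i σ).add
    ((hasFDerivAt_sum_mul_comp_apply (univ.filter (fun j => i < j)) (fun j => (c j i : ℝ))
      hasDerivAt_Kfun σ).const_mul (1 / 2))
  convert h using 1
  · rfl
  · ext v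
    simp only [phiDeriv, ContinuousLinearMap.proj_pi, _root_.add_apply,
      ContinuousLinearMap.proj_apply, _root_.sum_apply, _root_.smul_apply, smul_eq_mul, one_div, mul_sum, add_right_inj]
    exact sum_congr rfl fun j _ => by ring

theorem phiDeriv_single (c : Fin ℓ → Fin ℓ → ℤ) (σ : Fin ℓ → ℝ) (j : Fin ℓ) :
    phiDeriv c σ (Pi.single j 1) =
      Pi.single j 1 + ∑ i ∈ univ.filter (fun i => i < j),
        ((c j i : ℝ) * Jfun (σ j)) • (Pi.single i 1 : Fin ℓ → ℝ) := by
  funext i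
  simp [phiDeriv, Pi.single_apply]

theorem Jact_Phi_add_Jfun_mul_Lfun_Phi (l : Fin ℓ → ℤ) (c : Fin ℓ → Fin ℓ → ℤ)
    (σ : Fin ℓ → ℝ) (j : Fin ℓ) :
    Jact l c j (Phi c σ) + Jfun (σ j) * Lfun l c j (Phi c σ) = l j * Jfun (σ j) := by
  have hcomp := (differentiable_Klam l c (Phi c σ)).hasFDerivAt.comp σ (hasFDerivAt_Phi c σ)
  have hpot : HasFDerivAt (Klam l c ∘ Phi c)
      (∑ i, ((l i : ℝ) * (2 * Jfun (σ i))) •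
        ContinuousLinearMap.proj (R := ℝ) (φ := fun _ => ℝ) i) σ := by
    simpa only [Function.comp_def, Klam_Phi] using
      hasFDerivAt_sum_mul_comp_apply univ (fun i => (l i : ℝ)) hasDerivAt_Kfun σ
  have h := congrArg (· (Pi.single j 1)) (hcomp.unique hpot)
  simp only [ContinuousLinearMap.comp_apply, phiDeriv_single, map_add, map_sum, map_smul,
    smul_eq_mul, _root_.sum_apply, _root_.smul_apply, ContinuousLinearMap.proj_apply,
    Pi.single_apply, mul_ite, mul_one, mul_zero, sum_ite_eq', mem_univ, ↓reduceIte] at h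
  have hL : Jfun (σ j) * Lfun l c j (Phi c σ) =
      (1 / 2) * ∑ i ∈ univ.filter (fun i => i < j),
        c j i * Jfun (σ j) * fderiv ℝ (Klam l c) (Phi c σ) (Pi.single i 1) := by
    rw [Lfun, mul_sum, mul_sum]
    exact sum_congr rfl fun i _ => by rw [Jact]; ring
  rw [hL, Jact]
  linarith

end Shear

/-- Theorem 5.1 (recursion for the action variables): writing `τ̃ = Φ⁻¹(τ)`,
`J_j(τ) = 𝒥(τ̃_j)·(l_j − L_j(τ))` for every `j`; in particular
`J₁(τ) = l₁·𝒥(τ̃₁)`. -/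
theorem action_variable_recursion {ℓ : ℕ} (l : Fin ℓ → ℤ) (c : Fin ℓ → Fin ℓ → ℤ)
    (τ : Fin ℓ → ℝ) :
    (∀ j : Fin ℓ, Jact l c j τ = Jfun (PhiInv c τ j) * ((l j : ℝ) - Lfun l c j τ)) ∧
    (∀ h : 0 < ℓ, Jact l c ⟨0, h⟩ τ = (l ⟨0, h⟩ : ℝ) * Jfun (PhiInv c τ ⟨0, h⟩)) := by
  obtain ⟨σ, rfl⟩ : ∃ σ, Phi c σ = τ := ⟨_, Phi_phiInvRec c τ⟩
  have hrec (j : Fin ℓ) :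
      Jact l c j (Phi c σ) = Jfun (PhiInv c (Phi c σ) j) * (l j - Lfun l c j (Phi c σ)) := by
    rw [PhiInv_Phi, mul_sub]
    linarith [Jact_Phi_add_Jfun_mul_Lfun_Phi l c σ j]
  refine ⟨hrec, fun h => ?_⟩
  have hL : Lfun l c ⟨0, h⟩ (Phi c σ) = 0 := by simp [Lfun, Fin.lt_def]
  rw [hrec, hL, sub_zero, mul_comm]
end
end
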